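/- Exact recovery under a nullspace-type condition: suppose A : ℝ^m → ℝ^n is injective and y = A x₀ + e₀ where e₀ is supported on a set S with the property that for every nonzero z in the range of A, ∑_{i∈S} |z i| < ∑_{i∉S} |z i|. Then x₀ is the unique minimizer of x ↦ ‖y - A x‖₁. -/

import Mathlib

/-! With `z = A (x - x₀) ≠ 0` the residual at `x` is `e₀ - z`. Off `S` it is `-z`; on `S` its
absolute value is at least `|e₀| - |z|`. Hence its ℓ¹ norm is at least
`‖e₀‖₁ + (∑_{Sᶜ} |z| - ∑_S |z|) > ‖e₀‖₁`, and `e₀` is the residual at `x₀`. -/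

open Finset

section NullspaceProperty

variable {ι α : Type*} [Fintype ι] [DecidableEq ι]
  [AddCommGroup α] [LinearOrder α] [IsOrderedAddMonoid α]

theorem sum_abs_lt_sum_abs_sub_of_support_subset (S : Finset ι) {e z : ι → α}
    (he : ∀ i ∉ S, e i = 0) (hz : ∑ i ∈ S, |z i| < ∑ i ∈ Sᶜ, |z i|) :
    ∑ i, |e i| < ∑ i, |e i - z i| := by
  have h_e : ∑ i, |e i| = ∑ i ∈ S, |e i| :=
    (sum_subset (subset_univ S) fun i _ hi => by simp [he i hi]).symm
  have h_off : ∑ i ∈ Sᶜ, |e i - z i| = ∑ i ∈ Sᶜ, |z i| :=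
    sum_congr rfl fun i hi => by simp [he i (mem_compl.mp hi), abs_neg]
  have h_on : ∑ i ∈ S, (|e i| - |z i|) ≤ ∑ i ∈ S, |e i - z i| :=
    sum_le_sum fun i _ => abs_sub_abs_le_abs_sub _ _
  rw [sum_sub_distrib] at h_on
  rw [h_e, ← sum_add_sum_compl S, h_off]
  calc ∑ i ∈ S, |e i| < ∑ i ∈ S, |e i| + (∑ i ∈ Sᶜ, |z i| - ∑ i ∈ S, |z i|) :=
        lt_add_of_pos_right _ (sub_pos.mpr hz)
    _ = ∑ i ∈ S, |e i| - ∑ i ∈ S, |z i| + ∑ i ∈ Sᶜ, |z i| := by abel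
    _ ≤ ∑ i ∈ S, |e i - z i| + ∑ i ∈ Sᶜ, |z i| := add_le_add_left h_on _

end NullspaceProperty

theorem stmt14 {m n : ℕ} (A : (Fin m → ℝ) →ₗ[ℝ] (Fin n → ℝ))
    (hA : Function.Injective A) (x₀ : Fin m → ℝ) (e₀ : Fin n → ℝ)
    (S : Finset (Fin n)) (hsupp : ∀ i ∉ S, e₀ i = 0)
    (y : Fin n → ℝ) (hy : y = A x₀ + e₀)
    (hNSP : ∀ u : Fin m → ℝ, A u ≠ 0 →
      (∑ i ∈ S, |A u i|) < ∑ i ∈ Sᶜ, |A u i|) :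
    ∀ x : Fin m → ℝ, x ≠ x₀ →
      (∑ i, |y i - A x₀ i|) < ∑ i, |y i - A x i| := by
  intro x hx
  have h_ne : A (x - x₀) ≠ 0 := by
    rw [map_sub, sub_ne_zero]
    exact hA.ne hx
  have h_fit : ∀ i, y i - A x₀ i = e₀ i := fun i => by
    simp only [hy, Pi.add_apply, add_sub_cancel_left]
  have h_residual : ∀ i, y i - A x i = e₀ i - A (x - x₀) i := fun i => by
    simp only [hy, map_sub, Pi.add_apply, Pi.sub_apply]
    ring
  simpa only [h_fit, h_residual] using
    sum_abs_lt_sum_abs_sub_of_support_subset S hsupp (hNSP _ h_ne)
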